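/- arXiv:1212.3531 — 5 statements merged into one kernel-verified Lean document; each statement's English description precedes it below -/
import Mathlib

section
/- If X is a real random variable with density bounded by K and s > 0, then for all ε > 0, P(|X - s/X| < ε) ≤ 2Kε. -/
/-!
Bounding the density by `K` reduces the claim to `volume {x | |x - s / x| < ε} ≤ 2ε`. For `x > 0`
the condition reads `|x² - s| < εx`, which pins `x` between the positive roots `a < b` of
`x² ± εx - s`; these satisfy `ab = s` and `b - a = ε`. The map `x ↦ x - s / x` is odd, so the
negative solutions lie in `(-b, -a)`, and the set has measure at most `2ε`.
-/

open MeasureTheory ProbabilityTheory Set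

theorem measure_preimage_le_mul_volume_of_pdf_le {Ω E : Type*} [MeasurableSpace Ω]
    [MeasurableSpace E] {P : Measure Ω} {μ : Measure E} [SFinite μ] {X : Ω → E}
    [HasPDF X P μ] {K : ENNReal} (hK : ∀ x, pdf X P μ x ≤ K) (A : Set E) :
    P (X ⁻¹' A) ≤ K * μ A :=
  calc P (X ⁻¹' A) ≤ P.map X A := Measure.le_map_apply (HasPDF.aemeasurable X P μ) A
    _ = ∫⁻ x in A, pdf X P μ x ∂μ := by
      rw [map_eq_withDensity_pdf X P μ, withDensity_apply']
    _ ≤ ∫⁻ _ in A, K ∂μ := lintegral_mono hK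
    _ = K * μ A := setLIntegral_const A K

theorem mem_Ioo_of_abs_sub_div_lt {s ε x : ℝ} (hs : 0 < s) (hx : 0 < x)
    (h : |x - s / x| < ε) :
    x ∈ Ioo ((√(ε ^ 2 + 4 * s) - ε) / 2) ((√(ε ^ 2 + 4 * s) + ε) / 2) := by
  set r := √(ε ^ 2 + 4 * s)
  have hr : r ^ 2 = ε ^ 2 + 4 * s := Real.sq_sqrt (by positivity)
  have hε : 0 < ε := (abs_nonneg _).trans_lt h
  have hεr : ε < r := by nlinarith [Real.sqrt_nonneg (ε ^ 2 + 4 * s)]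
  have hquad : |x ^ 2 - s| < ε * x := by
    have : x - s / x = (x ^ 2 - s) / x := by field_simp
    rwa [this, abs_div, abs_of_pos hx, div_lt_iff₀ hx] at h
  -- `x ^ 2 ∓ ε * x - s` factor as `(x ∓ b) (x ± a)` with `a b` the endpoints, since `a * b = s`.
  obtain ⟨hlo, hhi⟩ := abs_lt.1 hquad
  constructor <;> nlinarith

theorem volume_abs_sub_div_lt_le {s ε : ℝ} (hs : 0 < s) (hε : 0 < ε) :
    volume {x : ℝ | |x - s / x| < ε} ≤ ENNReal.ofReal (2 * ε) := by
  set I := Ioo ((√(ε ^ 2 + 4 * s) - ε) / 2) ((√(ε ^ 2 + 4 * s) + ε) / 2)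
  have hsub : {x : ℝ | |x - s / x| < ε} ⊆ {0} ∪ I ∪ -I := by
    intro x (hx : |x - s / x| < ε)
    rcases lt_trichotomy x 0 with hneg | rfl | hpos
    · refine Or.inr (mem_Ioo_of_abs_sub_div_lt hs (neg_pos.2 hneg) ?_)
      rwa [div_neg, sub_neg_eq_add, neg_add_eq_sub, abs_sub_comm]
    · exact Or.inl (Or.inl rfl)
    · exact Or.inl (Or.inr (mem_Ioo_of_abs_sub_div_lt hs hpos hx))
  calc volume {x : ℝ | |x - s / x| < ε} ≤ volume ({0} ∪ I ∪ -I) := measure_mono hsub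
    _ ≤ volume ({0} : Set ℝ) + volume I + volume (-I) := by
      grw [measure_union_le, measure_union_le]
    _ = ENNReal.ofReal (2 * ε) := by
      rw [Measure.measure_neg, Real.volume_singleton, Real.volume_Ioo, zero_add,
        ← ENNReal.ofReal_add (by linarith) (by linarith)]
      ring_nf

theorem prob_abs_sub_div_lt_le_general {Ω : Type*} [MeasureSpace Ω]
    (X : Ω → ℝ) (K : ℝ) (hX : HasPDF X ℙ)
    (hK : ∀ x, pdf X ℙ volume x ≤ ENNReal.ofReal K)
    (s : ℝ) (hs : 0 < s) :
    ∀ ε > 0, ℙ {ω | |X ω - s / X ω| < ε} ≤ ENNReal.ofReal (2 * K * ε) := by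
  intro ε hε
  calc ℙ (X ⁻¹' {x | |x - s / x| < ε})
      ≤ ENNReal.ofReal K * volume {x : ℝ | |x - s / x| < ε} :=
        measure_preimage_le_mul_volume_of_pdf_le hK _
    _ ≤ ENNReal.ofReal K * ENNReal.ofReal (2 * ε) := by grw [volume_abs_sub_div_lt_le hs hε]
    _ = ENNReal.ofReal (2 * K * ε) := by rw [← ENNReal.ofReal_mul' (by positivity)]; ring_nf

/-- If X has density bounded by K and s > 0, then P(|X - s/X| < ε) ≤ 2Kε for all ε > 0. -/
theorem prob_abs_sub_div_lt_le {Ω : Type*} [MeasureSpace Ω]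
    [IsProbabilityMeasure (ℙ : Measure Ω)]
    (X : Ω → ℝ) (K : ℝ) (hX : HasPDF X ℙ)
    (hK : ∀ x, pdf X ℙ volume x ≤ ENNReal.ofReal K)
    (s : ℝ) (hs : 0 < s) :
    ∀ ε > 0, ℙ {ω | |X ω - s / X ω| < ε} ≤ ENNReal.ofReal (2 * K * ε) :=
  prob_abs_sub_div_lt_le_general X K hX hK s hs
end

section
/- If X is a real random variable with density bounded by K, p a real constant, and q ≥ 0, then for all t > 0, P(|(X+p)/((X+p)² + q)| > t) ≤ 2K/t. -/
/-!
Since `y² + q ≥ y²`, the ratio `|y / (y² + q)|` is at most `1 / |y|`; with `y = X + p` it can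
therefore exceed `t` only when `X` lies in the interval of radius `1 / t` about `-p`. A density
bounded by `K` gives that interval probability at most `K` times its length `2 / t`.
-/

open MeasureTheory ProbabilityTheory

lemma abs_lt_inv_of_lt_abs_div_sq_add {y q t : ℝ} (hq : 0 ≤ q) (ht : 0 < t)
    (h : t < |y / (y ^ 2 + q)|) : |y| < t⁻¹ := by
  have hy : 0 < |y| := by
    refine abs_pos.mpr fun hy ↦ ?_
    simp [hy] at h
    linarith
  have hratio : |y / (y ^ 2 + q)| ≤ |y|⁻¹ := calc
    |y / (y ^ 2 + q)| = |y| / (|y| ^ 2 + q) := by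
      rw [abs_div, sq_abs, abs_of_nonneg (by positivity : 0 ≤ y ^ 2 + q)]
    _ ≤ |y| / |y| ^ 2 := div_le_div_of_nonneg_left hy.le (by positivity) (by linarith)
    _ = |y|⁻¹ := by field_simp
  exact (lt_inv_comm₀ ht hy).mp (h.trans_le hratio)

lemma measure_preimage_le_mul_of_pdf_le {Ω E : Type*} {_ : MeasurableSpace Ω}
    [MeasurableSpace E] {μ : Measure Ω} {ν : Measure E} {X : Ω → E} [HasPDF X μ ν]
    {C : ENNReal} (hC : ∀ x, pdf X μ ν x ≤ C) {s : Set E} (hs : MeasurableSet s) :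
    μ (X ⁻¹' s) ≤ C * ν s := calc
  μ (X ⁻¹' s) = Measure.map X μ s :=
    (Measure.map_apply_of_aemeasurable (HasPDF.aemeasurable X μ ν) hs).symm
  _ = ∫⁻ x in s, pdf X μ ν x ∂ν := map_eq_setLIntegral_pdf X μ ν hs
  _ ≤ ∫⁻ _ in s, C ∂ν := lintegral_mono hC
  _ = C * ν s := setLIntegral_const s C

theorem prob_ratio_gt_le_of_nonneg_general {Ω : Type*} [MeasureSpace Ω]
    (X : Ω → ℝ) (K : ℝ) (hX : HasPDF X ℙ)
    (hK : ∀ x, pdf X ℙ volume x ≤ ENNReal.ofReal K)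
    (p q : ℝ) (hq : 0 ≤ q) :
    ∀ t > 0, ℙ {ω | |(X ω + p) / ((X ω + p) ^ 2 + q)| > t} ≤ ENNReal.ofReal (2 * K / t) := by
  intro t ht
  have hsub : {ω | |(X ω + p) / ((X ω + p) ^ 2 + q)| > t} ⊆ X ⁻¹' Metric.ball (-p) t⁻¹ := by
    intro ω hω
    simpa [Real.dist_eq] using abs_lt_inv_of_lt_abs_div_sq_add hq ht hω
  calc ℙ {ω | |(X ω + p) / ((X ω + p) ^ 2 + q)| > t}
      ≤ ℙ (X ⁻¹' Metric.ball (-p) t⁻¹) := measure_mono hsub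
    _ ≤ ENNReal.ofReal K * volume (Metric.ball (-p) t⁻¹) :=
      measure_preimage_le_mul_of_pdf_le hK measurableSet_ball
    _ = ENNReal.ofReal (2 * K / t) := by
      rw [Real.volume_ball, ← ENNReal.ofReal_mul' (by positivity)]
      ring_nf

/-- If X has density bounded by K, p ∈ ℝ, q ≥ 0, then
P(|(X+p)/((X+p)² + q)| > t) ≤ 2K/t for all t > 0. -/
theorem prob_ratio_gt_le_of_nonneg {Ω : Type*} [MeasureSpace Ω]
    [IsProbabilityMeasure (ℙ : Measure Ω)]
    (X : Ω → ℝ) (K : ℝ) (hX : HasPDF X ℙ)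
    (hK : ∀ x, pdf X ℙ volume x ≤ ENNReal.ofReal K)
    (p q : ℝ) (hq : 0 ≤ q) :
    ∀ t > 0, ℙ {ω | |(X ω + p) / ((X ω + p) ^ 2 + q)| > t} ≤ ENNReal.ofReal (2 * K / t) :=
  prob_ratio_gt_le_of_nonneg_general X K hX hK p q hq
end

section
/- If X is a real random variable with density bounded by K, p ∈ ℝ, and q ∈ ℝ arbitrary, then for all t > 0, P(|(X+p)/((X+p)² + q)| > t) ≤ 2K/t. -/
/-!
A density bounded by `K` gives `P(X ∈ A) ≤ K · vol A`, and Lebesgue measure is translation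
invariant, so it suffices to bound the length of `{z | t < |z / (z² + q)|}`. This set lies in
`{z | |z² + q| < c |z|}` with `c = 1 / t`. For `z > 0` the two quadratic inequalities
`z² - c z + q < 0 < z² + c z + q` confine `z` strictly between the roots
`(√(c² - 4q) - c) / 2` and `(√(c² - 4q) + c) / 2`, an interval of length `c`; for `z < 0` apply
this to `-z`. So the length is at most `2c`, whatever the sign of `q`.
-/

open MeasureTheory ProbabilityTheory Set

open scoped ENNReal

lemma measure_preimage_le_of_pdf_le {Ω E : Type*} [MeasurableSpace Ω] [MeasurableSpace E]
    {P : Measure Ω} {μ : Measure E} [SFinite μ] (X : Ω → E) [HasPDF X P μ] {K : ℝ≥0∞}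
    (hK : ∀ x, pdf X P μ x ≤ K) (A : Set E) :
    P (X ⁻¹' A) ≤ K * μ A :=
  calc P (X ⁻¹' A) ≤ Measure.map X P A := Measure.le_map_apply (HasPDF.aemeasurable X P μ) A
    _ = ∫⁻ x in A, pdf X P μ x ∂μ := by
      rw [map_eq_withDensity_pdf X P μ, withDensity_apply']
    _ ≤ ∫⁻ _ in A, K ∂μ := lintegral_mono hK
    _ = K * μ A := setLIntegral_const A K

lemma mem_Ioo_of_abs_sq_add_lt {q c z : ℝ} (hz : 0 < z) (h : |z ^ 2 + q| < c * z) :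
    z ∈ Ioo ((√(c ^ 2 - 4 * q) - c) / 2) ((√(c ^ 2 - 4 * q) + c) / 2) := by
  obtain ⟨hlow, hup⟩ := abs_lt.mp h
  have hc : 0 < c := pos_of_mul_pos_left ((abs_nonneg _).trans_lt h) hz.le
  constructor
  · have : √(c ^ 2 - 4 * q) < 2 * z + c := (Real.sqrt_lt' (by linarith)).mpr (by nlinarith)
    linarith
  · have : 2 * z - c < √(c ^ 2 - 4 * q) := Real.lt_sqrt_of_sq_lt (by nlinarith)
    linarith

lemma volume_abs_sq_add_lt_le (q : ℝ) {c : ℝ} (hc : 0 ≤ c) :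
    volume {z : ℝ | |z ^ 2 + q| < c * |z|} ≤ ENNReal.ofReal (2 * c) := by
  set a := (√(c ^ 2 - 4 * q) - c) / 2
  set b := (√(c ^ 2 - 4 * q) + c) / 2
  have hsub : {z : ℝ | |z ^ 2 + q| < c * |z|} ⊆ Ioo a b ∪ Ioo (-b) (-a) := by
    intro z hz
    have hz0 : 0 < |z| := pos_of_mul_pos_right ((abs_nonneg _).trans_lt hz) hc
    have hmem := mem_Ioo_of_abs_sq_add_lt hz0 (by rwa [sq_abs])
    rcases abs_cases z with ⟨habs, -⟩ | ⟨habs, -⟩ <;> rw [habs] at hmem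
    · exact Or.inl hmem
    · exact Or.inr ⟨neg_lt.mp hmem.2, lt_neg.mp hmem.1⟩
  calc volume {z : ℝ | |z ^ 2 + q| < c * |z|}
      ≤ volume (Ioo a b) + volume (Ioo (-b) (-a)) :=
        (measure_mono hsub).trans (measure_union_le _ _)
    _ = ENNReal.ofReal c + ENNReal.ofReal c := by
      rw [Real.volume_Ioo, Real.volume_Ioo]
      congr 2 <;> ring
    _ = ENNReal.ofReal (2 * c) := by
      rw [← ENNReal.ofReal_add hc hc, two_mul]

lemma abs_sq_add_lt_of_lt_abs_div {q t z : ℝ} (ht : 0 < t) (h : t < |z / (z ^ 2 + q)|) :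
    |z ^ 2 + q| < 1 / t * |z| := by
  rw [abs_div] at h
  have hden : 0 < |z ^ 2 + q| := by
    by_contra! hle
    rw [abs_nonpos_iff.mp hle, abs_zero, div_zero] at h
    exact h.not_gt ht
  rw [lt_div_iff₀ hden] at h
  rw [one_div_mul_eq_div, lt_div_iff₀ ht]
  linarith

theorem prob_ratio_gt_le_general {Ω : Type*} [MeasureSpace Ω]
    (X : Ω → ℝ) (K : ℝ) (hX : HasPDF X ℙ)
    (hK : ∀ x, pdf X ℙ volume x ≤ ENNReal.ofReal K)
    (p q : ℝ) :
    ∀ t > 0, ℙ {ω | |(X ω + p) / ((X ω + p) ^ 2 + q)| > t} ≤ ENNReal.ofReal (2 * K / t) := by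
  intro t ht
  set S := {z : ℝ | t < |z / (z ^ 2 + q)|}
  calc ℙ {ω | |(X ω + p) / ((X ω + p) ^ 2 + q)| > t} = ℙ (X ⁻¹' ((· + p) ⁻¹' S)) := rfl
    _ ≤ ENNReal.ofReal K * volume ((· + p) ⁻¹' S) := measure_preimage_le_of_pdf_le X hK _
    _ = ENNReal.ofReal K * volume S := by rw [measure_preimage_add_right]
    _ ≤ ENNReal.ofReal K * ENNReal.ofReal (2 * (1 / t)) := by
      gcongr
      exact (measure_mono fun z => abs_sq_add_lt_of_lt_abs_div ht).trans
        (volume_abs_sq_add_lt_le q (by positivity))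
    _ = ENNReal.ofReal (2 * K / t) := by
      rw [← ENNReal.ofReal_mul' (by positivity)]
      ring_nf

/-- If X has density bounded by K, p ∈ ℝ, q ∈ ℝ arbitrary, then
P(|(X+p)/((X+p)² + q)| > t) ≤ 2K/t for all t > 0. -/
theorem prob_ratio_gt_le {Ω : Type*} [MeasureSpace Ω]
    [IsProbabilityMeasure (ℙ : Measure Ω)]
    (X : Ω → ℝ) (K : ℝ) (hX : HasPDF X ℙ)
    (hK : ∀ x, pdf X ℙ volume x ≤ ENNReal.ofReal K)
    (p q : ℝ) :
    ∀ t > 0, ℙ {ω | |(X ω + p) / ((X ω + p) ^ 2 + q)| > t} ≤ ENNReal.ofReal (2 * K / t) :=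
  prob_ratio_gt_le_general X K hX hK p q
end

section
/- For any finite sequence of real random variables X₁,…,X_m, the weak L¹ quasi-norm of (∑ᵢ Xᵢ²)^{1/2} is at most 4 ∑ᵢ ‖Xᵢ‖_{1,∞}, where ‖X‖_{1,∞} := sup_{t>0} t · P(|X| > t). -/
open MeasureTheory ProbabilityTheory

/-- The weak L¹ (Lorentz L^{1,∞}) quasi-norm of a real random variable:
‖X‖_{1,∞} = sup_{t>0} t · P(|X| > t). -/
noncomputable def weakL1Norm {Ω : Type*} [MeasureSpace Ω] (X : Ω → ℝ) : ENNReal :=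
  ⨆ (t : ℝ) (_ : 0 < t), ENNReal.ofReal t * ℙ {ω | |X ω| > t}

/-!
Fix `t > 0`. If `√(∑ Xᵢ²) > t`, then either some `|Xᵢ| > t`, or already
`∑ min(|Xᵢ|, t)² > t²`. The first event has probability at most `∑ ‖Xᵢ‖_{1,∞} / t`. For the
second, Markov's inequality and the layer-cake formula
`E min(|Xᵢ|, t)² = ∫₀ᵗ 2s P(|Xᵢ| > s) ds ≤ 2t ‖Xᵢ‖_{1,∞}` give at most `2 ∑ ‖Xᵢ‖_{1,∞} / t`;
altogether the constant is `3`.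

The `Xᵢ` need not be measurable, so `ℙ` is only an outer measure on their level sets. The
argument is therefore run on measurable majorants of the `|Xᵢ|` whose tails are no larger.
-/

open Set
open ENNReal (ofReal)
open scoped ENNReal

section

variable {α : Type*} [MeasurableSpace α] (μ : Measure α)

theorem exists_measurable_ge_measure_lt_le (f : α → ℝ≥0∞) :
    ∃ g : α → ℝ≥0∞, Measurable g ∧ f ≤ g ∧ ∀ s, μ {x | s < g x} ≤ μ {x | s < f x} := by
  -- Measurable hulls of `{q < f}`, made antitone in `q` so that `μ` is continuous along unions.
  set E : ℚ → Set α := fun q => ⋂ (p : ℚ) (_ : p ≤ q), toMeasurable μ {x | ofReal p < f x}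
  have hE_meas (q : ℚ) : MeasurableSet (E q) :=
    .iInter fun _ => .iInter fun _ => measurableSet_toMeasurable _ _
  have hE_anti : Antitone E := fun q q' h =>
    iInter₂_mono' fun p hp => ⟨p, hp.trans h, subset_rfl⟩
  have hE_le (q : ℚ) : μ (E q) ≤ μ {x | ofReal q < f x} :=
    (measure_mono fun _ (hx : _ ∈ E q) => mem_iInter₂.1 hx q le_rfl).trans
      (measure_toMeasurable _).le
  refine ⟨fun x => ⨆ q, (E q).indicator (fun _ => ofReal q) x,
    .iSup fun q => measurable_const.indicator (hE_meas q), fun x => ?_, fun s => ?_⟩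
  · refine le_of_forall_lt fun c hc => ?_
    obtain ⟨q, -, hcq, hqf⟩ := ENNReal.lt_iff_exists_rat_btwn.1 hc
    have hx : x ∈ E q := mem_iInter₂.2 fun p hp => subset_toMeasurable _ _ <|
      (ENNReal.ofReal_le_ofReal (Rat.cast_le.2 hp)).trans_lt hqf
    exact hcq.trans_le (le_iSup_of_le q (indicator_of_mem hx (fun _ => ofReal q)).ge)
  · have hsub : {x | s < ⨆ q, (E q).indicator (fun _ => ofReal q) x} ⊆
        ⋃ q : {q : ℚ // s < ofReal q}, E q := by
      intro x (hx : s < ⨆ q, _)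
      obtain ⟨q, hq⟩ := lt_iSup_iff.1 hx
      by_cases hxq : x ∈ E q
      · rw [indicator_of_mem hxq] at hq
        exact mem_iUnion.2 ⟨⟨q, hq⟩, hxq⟩
      · simp [indicator_of_notMem hxq] at hq
    calc _ ≤ μ (⋃ q : {q : ℚ // s < ofReal q}, E q) := measure_mono hsub
      _ = ⨆ q : {q : ℚ // s < ofReal q}, μ (E q) :=
        (hE_anti.comp_monotone (Subtype.mono_coe _)).measure_iUnion
      _ ≤ μ {x | s < f x} := iSup_le fun q =>
        (hE_le q).trans (measure_mono fun x hx => q.2.trans hx)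

theorem lintegral_min_sq_le {g : α → ℝ≥0∞} (hg : Measurable g) {N : ℝ≥0∞}
    (hN : ∀ s : ℝ, 0 < s → ofReal s * μ {x | ofReal s < g x} ≤ N) {t : ℝ} (ht : 0 < t) :
    ∫⁻ x, min (g x) (ofReal t) ^ 2 ∂μ ≤ 2 * ofReal t * N := by
  have hmin_ne_top (x : α) : min (g x) (ofReal t) ≠ ∞ :=
    (min_lt_of_right_lt ENNReal.ofReal_lt_top).ne
  set f : α → ℝ := fun x => (min (g x) (ofReal t)).toReal
  have hf_le (x : α) : f x ≤ t := ENNReal.toReal_le_of_le_ofReal ht.le (min_le_right _ _)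
  have hf_sq (x : α) : ofReal (f x ^ (2 : ℝ)) = min (g x) (ofReal t) ^ 2 := by
    rw [Real.rpow_two, ENNReal.ofReal_pow ENNReal.toReal_nonneg,
      ENNReal.ofReal_toReal (hmin_ne_top x)]
  have h_tail (s : ℝ) (hs : s ∈ Ioi 0) :
      μ {x | s < f x} * ofReal (s ^ ((2 : ℝ) - 1)) ≤ (Iio t).indicator (fun _ => N) s := by
    rw [show (2 : ℝ) - 1 = 1 by norm_num, Real.rpow_one, mul_comm]
    by_cases hst : s < t
    · rw [indicator_of_mem (mem_Iio.2 hst)]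
      refine le_trans (mul_le_mul_right (measure_mono fun x (hx : s < f x) => ?_) _) (hN s hs)
      exact (ENNReal.ofReal_lt_iff_lt_toReal hs.le (hmin_ne_top x)).2 hx
        |>.trans_le (min_le_left _ _)
    · have : {x | s < f x} = ∅ :=
        eq_empty_of_forall_notMem fun x hx => hst (hx.trans_le (hf_le x))
      simp [this]
  calc ∫⁻ x, min (g x) (ofReal t) ^ 2 ∂μ
      = ofReal 2 * ∫⁻ s in Ioi 0, μ {x | s < f x} * ofReal (s ^ ((2 : ℝ) - 1)) := by
        simp_rw [← hf_sq]
        exact lintegral_rpow_eq_lintegral_meas_lt_mul μ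
          (ae_of_all _ fun _ => ENNReal.toReal_nonneg)
          (hg.min measurable_const).ennreal_toReal.aemeasurable two_pos
    _ ≤ 2 * ∫⁻ s in Ioi 0, (Iio t).indicator (fun _ => N) s := by
        rw [ENNReal.ofReal_ofNat]
        gcongr 2 * ?_
        exact setLIntegral_mono' measurableSet_Ioi h_tail
    _ = 2 * ofReal t * N := by
        rw [lintegral_indicator_const measurableSet_Iio, Measure.restrict_apply measurableSet_Iio,
          Iio_inter_Ioi, Real.volume_Ioo, sub_zero]
        ring

variable {ι : Type*} [Fintype ι] {g : ι → α → ℝ≥0∞} {N : ι → ℝ≥0∞}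

theorem mul_measure_sq_lt_sum_min_sq_le (hg : ∀ i, Measurable (g i))
    (hN : ∀ i, ∀ s : ℝ, 0 < s → ofReal s * μ {x | ofReal s < g i x} ≤ N i)
    {t : ℝ} (ht : 0 < t) :
    ofReal t * μ {x | ofReal t ^ 2 < ∑ i, min (g i x) (ofReal t) ^ 2} ≤ 2 * ∑ i, N i := by
  set T := ofReal t
  have hmin (i : ι) : Measurable fun x => min (g i x) T ^ 2 :=
    ((hg i).min measurable_const).pow_const 2
  refine (ENNReal.mul_le_mul_iff_right (ENNReal.ofReal_pos.2 ht).ne' ENNReal.ofReal_ne_top).1 ?_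
  calc T * (T * μ {x | T ^ 2 < ∑ i, min (g i x) T ^ 2})
      = T ^ 2 * μ {x | T ^ 2 < ∑ i, min (g i x) T ^ 2} := by ring
    _ ≤ T ^ 2 * μ {x | T ^ 2 ≤ ∑ i, min (g i x) T ^ 2} := by
        gcongr
        exact le_of_lt
    _ ≤ ∫⁻ x, ∑ i, min (g i x) T ^ 2 ∂μ :=
        mul_meas_ge_le_lintegral₀ (Finset.measurable_sum _ fun i _ => hmin i).aemeasurable _
    _ = ∑ i, ∫⁻ x, min (g i x) T ^ 2 ∂μ := lintegral_finsetSum _ fun i _ => hmin i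
    _ ≤ ∑ i, 2 * T * N i := Finset.sum_le_sum fun i _ => lintegral_min_sq_le μ (hg i) (hN i) ht
    _ = T * (2 * ∑ i, N i) := by rw [← Finset.mul_sum]; ring

theorem mul_measure_sq_lt_sum_sq_le (hg : ∀ i, Measurable (g i))
    (hN : ∀ i, ∀ s : ℝ, 0 < s → ofReal s * μ {x | ofReal s < g i x} ≤ N i)
    {t : ℝ} (ht : 0 < t) :
    ofReal t * μ {x | ofReal t ^ 2 < ∑ i, g i x ^ 2} ≤ 3 * ∑ i, N i := by
  set T := ofReal t
  have hsplit : {x | T ^ 2 < ∑ i, g i x ^ 2} ⊆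
      (⋃ i, {x | T < g i x}) ∪ {x | T ^ 2 < ∑ i, min (g i x) T ^ 2} := by
    intro x (hx : T ^ 2 < _)
    by_cases hlarge : ∃ i, T < g i x
    · exact .inl (mem_iUnion.2 hlarge)
    · push Not at hlarge
      refine .inr ?_
      simpa only [mem_ofPred_eq, min_eq_left (hlarge _)] using hx
  calc T * μ {x | T ^ 2 < ∑ i, g i x ^ 2}
      ≤ T * (∑ i, μ {x | T < g i x} + μ {x | T ^ 2 < ∑ i, min (g i x) T ^ 2}) := by
        gcongr
        exact (measure_mono hsplit).trans <| (measure_union_le _ _).trans <|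
          add_le_add_left (measure_iUnion_fintype_le _ _) _
    _ = ∑ i, T * μ {x | T < g i x} + T * μ {x | T ^ 2 < ∑ i, min (g i x) T ^ 2} := by
        rw [mul_add, Finset.mul_sum]
    _ ≤ ∑ i, N i + 2 * ∑ i, N i :=
        add_le_add (Finset.sum_le_sum fun i _ => hN i t ht)
          (mul_measure_sq_lt_sum_min_sq_le μ hg hN ht)
    _ = 3 * ∑ i, N i := by ring

end

theorem ofReal_sq_lt_sum_sq_of_lt_sqrt {ι : Type*} [Fintype ι] {a : ι → ℝ} {b : ι → ℝ≥0∞}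
    (hab : ∀ i, ofReal |a i| ≤ b i) {t : ℝ} (ht : 0 ≤ t) (hlt : t < Real.sqrt (∑ i, a i ^ 2)) :
    ofReal t ^ 2 < ∑ i, b i ^ 2 :=
  calc ofReal t ^ 2 < ∑ i, ofReal |a i| ^ 2 := by
        simp_rw [← ENNReal.ofReal_pow ht, ← ENNReal.ofReal_pow (abs_nonneg _), sq_abs,
          ← ENNReal.ofReal_sum_of_nonneg fun i _ => sq_nonneg (a i)]
        exact (ENNReal.ofReal_lt_ofReal_iff_of_nonneg (sq_nonneg t)).2 ((Real.lt_sqrt ht).1 hlt)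
    _ ≤ ∑ i, b i ^ 2 := by gcongr with i; exact hab i

theorem ofReal_mul_measure_lt_le_weakL1Norm {Ω : Type*} [MeasureSpace Ω] (X : Ω → ℝ)
    {s : ℝ} (hs : 0 < s) : ofReal s * ℙ {ω | ofReal s < ofReal |X ω|} ≤ weakL1Norm X := by
  simp only [ENNReal.ofReal_lt_ofReal_iff_of_nonneg hs.le]
  exact le_iSup₂ (f := fun s (_ : 0 < s) => ofReal s * ℙ {ω | |X ω| > s}) s hs

theorem weakL1Norm_sqrt_sum_sq_le_general {Ω : Type*} [MeasureSpace Ω]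
    {m : ℕ} (X : Fin m → Ω → ℝ) :
    weakL1Norm (fun ω => Real.sqrt (∑ i, (X i ω) ^ 2)) ≤ 4 * ∑ i, weakL1Norm (X i) := by
  choose g hg_meas hg_ge hg_tail using
    fun i => exists_measurable_ge_measure_lt_le ℙ fun ω => ofReal |X i ω|
  have hg_weak (i : Fin m) (s : ℝ) (hs : 0 < s) :
      ofReal s * ℙ {ω | ofReal s < g i ω} ≤ weakL1Norm (X i) :=
    (mul_le_mul_right (hg_tail i _) _).trans (ofReal_mul_measure_lt_le_weakL1Norm (X i) hs)
  refine iSup₂_le fun t ht => ?_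
  calc ofReal t * ℙ {ω | |Real.sqrt (∑ i, (X i ω) ^ 2)| > t}
      ≤ ofReal t * ℙ {ω | ofReal t ^ 2 < ∑ i, g i ω ^ 2} := by
        gcongr with ω
        rw [gt_iff_lt, abs_of_nonneg (Real.sqrt_nonneg _)]
        exact ofReal_sq_lt_sum_sq_of_lt_sqrt (hg_ge · ω) ht.le
    _ ≤ 3 * ∑ i, weakL1Norm (X i) := mul_measure_sq_lt_sum_sq_le ℙ hg_meas hg_weak ht
    _ ≤ 4 * ∑ i, weakL1Norm (X i) := by gcongr; norm_num

/-- For any finite sequence of real random variables, the weak L¹ quasi-norm of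
(∑ᵢ Xᵢ²)^{1/2} is at most 4 ∑ᵢ ‖Xᵢ‖_{1,∞}. -/
theorem weakL1Norm_sqrt_sum_sq_le {Ω : Type*} [MeasureSpace Ω]
    [IsProbabilityMeasure (ℙ : Measure Ω)]
    {m : ℕ} (X : Fin m → Ω → ℝ) :
    weakL1Norm (fun ω => Real.sqrt (∑ i, (X i ω) ^ 2)) ≤ 4 * ∑ i, weakL1Norm (X i) :=
  weakL1Norm_sqrt_sum_sq_le_general X
end

section
/- Let A be an n×n random symmetric matrix whose entries A_{i,j}, i ≤ j, are independent with continuous distributions having densities bounded by K. Then for every pair (i,j), the weak L¹ quasi-norm of the (i,j) entry of A⁻¹ satisfies ‖(A⁻¹)_{i,j}‖_{1,∞} ≤ 2K, i.e., for all t > 0, P(|(A⁻¹)_{i,j}| > t) ≤ 2K/t. -/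
/-!
Freeze every entry of `A` except the symmetric pair `A i j = A j i` and call its value `x`.
By Cramer's rule `(A⁻¹) i j = adj i j / det`, and multilinearity of the determinant in the rows
`i` and `j` shows that this is `(a x + b) / (a x² + 2 b x + c)` (`b / (b x + c)` when `i = j`),
i.e. a translate of `u ↦ u / (u² + δ)`. For `δ < 0` this is `½ (1/(u - r) + 1/(u + r))`, and
Boole's identity gives `|{u | t < u / (u² - r²)}| = 1/t`; for `δ ≥ 0` it is bounded by `1/|u|`.
Either way the bad set of `x` has length at most `2/t`, hence probability at most `2K/t` under
the law of `A i j`, and independence (Fubini over the product law) integrates this bound over the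
remaining entries.
-/

open MeasureTheory ProbabilityTheory Set
open scoped ENNReal

lemma volume_lt_div_sq_sub_sq_le {r t : ℝ} (hr : 0 ≤ r) (ht : 0 < t) :
    volume {u : ℝ | t < u / (u ^ 2 - r ^ 2)} ≤ ENNReal.ofReal (1 / t) := by
  set s := √(1 + 4 * t ^ 2 * r ^ 2)
  have hs : 0 ≤ s := Real.sqrt_nonneg _
  have hs2 : s ^ 2 = 1 + 4 * t ^ 2 * r ^ 2 := Real.sq_sqrt (by positivity)
  -- `u / (u² - r²) = t` at `u = (1 ± s) / (2t)`, one root in each of `(-r, 0)` and `(r, ∞)`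
  have hsub : {u : ℝ | t < u / (u ^ 2 - r ^ 2)} ⊆
      Ioo r ((1 + s) / (2 * t)) ∪ Ioo (-r) ((1 - s) / (2 * t)) := by
    intro u (hu : t < u / (u ^ 2 - r ^ 2))
    rcases lt_trichotomy (u ^ 2 - r ^ 2) 0 with hd | hd | hd
    · have hu' : u < t * (u ^ 2 - r ^ 2) := (lt_div_iff_of_neg hd).mp hu
      have hu0 : u < 0 := hu'.trans (mul_neg_of_pos_of_neg ht hd)
      have hsq : s ^ 2 < (1 - 2 * t * u) ^ 2 := by nlinarith [mul_pos ht (sub_pos.mpr hu')]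
      have hroot : s < 1 - 2 * t * u := lt_of_pow_lt_pow_left₀ 2 (by nlinarith) hsq
      refine Or.inr ⟨by nlinarith, ?_⟩
      rw [lt_div_iff₀ (by positivity)]
      linarith
    · simp [hd] at hu; linarith
    · have hu' : t * (u ^ 2 - r ^ 2) < u := (lt_div_iff₀ hd).mp hu
      have hu0 : 0 < u := lt_trans (mul_pos ht hd) hu'
      have hsq : (2 * t * u - 1) ^ 2 < s ^ 2 := by nlinarith [mul_pos ht (sub_pos.mpr hu')]
      have hroot : 2 * t * u - 1 < s := lt_of_pow_lt_pow_left₀ 2 hs hsq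
      refine Or.inl ⟨by nlinarith, ?_⟩
      rw [lt_div_iff₀ (by positivity)]
      linarith
  have hupper : 0 ≤ (1 + s) / (2 * t) - r := by
    rw [sub_nonneg, le_div_iff₀ (by positivity)]; nlinarith
  have hlower : 0 ≤ (1 - s) / (2 * t) - -r := by
    have : s ≤ 1 + 2 * t * r := le_of_pow_le_pow_left₀ two_ne_zero (by positivity) (by nlinarith)
    rw [sub_nonneg, le_div_iff₀ (by positivity)]; nlinarith
  calc volume {u : ℝ | t < u / (u ^ 2 - r ^ 2)}
      ≤ volume (Ioo r ((1 + s) / (2 * t))) + volume (Ioo (-r) ((1 - s) / (2 * t))) :=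
        (measure_mono hsub).trans (measure_union_le _ _)
    _ = ENNReal.ofReal (1 / t) := by
        rw [Real.volume_Ioo, Real.volume_Ioo, ← ENNReal.ofReal_add hupper hlower]
        congr 1
        field_simp
        ring

lemma volume_lt_abs_div_sq_add_le (δ : ℝ) {t : ℝ} (ht : 0 < t) :
    volume {u : ℝ | t < |u / (u ^ 2 + δ)|} ≤ ENNReal.ofReal (2 / t) := by
  rcases le_or_gt 0 δ with hδ | hδ
  · have hsub : {u : ℝ | t < |u / (u ^ 2 + δ)|} ⊆ Ioo (-(1 / t)) (1 / t) := by
      intro u (hu : t < |u / (u ^ 2 + δ)|)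
      have hu0 : u ≠ 0 := by rintro rfl; simp at hu; linarith
      have hpos : 0 < u ^ 2 + δ := by positivity
      rw [abs_div, abs_of_pos hpos, lt_div_iff₀ hpos] at hu
      have habs : |u| < 1 / t := by
        rw [lt_div_iff₀ ht]
        nlinarith [sq_abs u, abs_pos.mpr hu0]
      exact abs_lt.mp habs
    calc _ ≤ volume (Ioo (-(1 / t)) (1 / t)) := measure_mono hsub
      _ = ENNReal.ofReal (2 / t) := by rw [Real.volume_Ioo]; ring_nf
  · obtain ⟨r, hr, rfl⟩ : ∃ r : ℝ, 0 ≤ r ∧ δ = -r ^ 2 :=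
      ⟨√(-δ), Real.sqrt_nonneg _, by rw [Real.sq_sqrt (by linarith)]; ring⟩
    set S := {u : ℝ | t < u / (u ^ 2 - r ^ 2)}
    have hsplit : {u : ℝ | t < |u / (u ^ 2 + -r ^ 2)|} ⊆ S ∪ Neg.neg ⁻¹' S := by
      intro u (hu : t < |u / (u ^ 2 + -r ^ 2)|)
      rw [← sub_eq_add_neg] at hu
      rcases lt_abs.mp hu with h | h
      · exact Or.inl h
      · right
        show t < -u / ((-u) ^ 2 - r ^ 2)
        rwa [neg_sq, neg_div]
    calc _ ≤ volume S + volume (Neg.neg ⁻¹' S) :=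
          (measure_mono hsplit).trans (measure_union_le _ _)
      _ ≤ ENNReal.ofReal (1 / t) + ENNReal.ofReal (1 / t) := by
          rw [Measure.measure_preimage_neg]
          gcongr <;> exact volume_lt_div_sq_sub_sq_le hr ht
      _ = ENNReal.ofReal (2 / t) := by
          rw [← ENNReal.ofReal_add (by positivity) (by positivity)]; ring_nf

lemma volume_lt_abs_div_linear_le (b c : ℝ) {t : ℝ} (ht : 0 < t) :
    volume {x : ℝ | t < |b / (b * x + c)|} ≤ ENNReal.ofReal (2 / t) := by
  rcases eq_or_ne b 0 with rfl | hb
  · simp [ht.not_gt]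
  have hset : {x : ℝ | t < |b / (b * x + c)|} =
      (· + c / b) ⁻¹' {u : ℝ | t < |u / (u ^ 2 + 0)|} := by
    ext x
    have hlin : b * x + c = b * (x + c / b) := by field_simp
    rw [mem_preimage, mem_ofPred_eq, mem_ofPred_eq, add_zero, sq, div_self_mul_self', hlin,
      div_mul_cancel_left₀ hb]
  rw [hset, measure_preimage_add_right]
  exact volume_lt_abs_div_sq_add_le 0 ht

lemma volume_lt_abs_div_quadratic_le (a b c : ℝ) {t : ℝ} (ht : 0 < t) :
    volume {x : ℝ | t < |(a * x + b) / (a * x ^ 2 + 2 * b * x + c)|} ≤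
      ENNReal.ofReal (2 / t) := by
  rcases eq_or_ne a 0 with rfl | ha
  · have hsub : {x : ℝ | t < |(0 * x + b) / (0 * x ^ 2 + 2 * b * x + c)|} ⊆
        {x : ℝ | 2 * t < |2 * b / (2 * b * x + c)|} := by
      intro x (hx : t < |(0 * x + b) / (0 * x ^ 2 + 2 * b * x + c)|)
      rw [mem_ofPred_eq, mul_div_assoc, abs_mul, abs_two]
      simp only [zero_mul, zero_add] at hx
      linarith
    calc _ ≤ _ := measure_mono hsub
      _ ≤ ENNReal.ofReal (2 / (2 * t)) := volume_lt_abs_div_linear_le _ _ (by positivity)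
      _ ≤ ENNReal.ofReal (2 / t) := by gcongr; linarith
  have hset : {x : ℝ | t < |(a * x + b) / (a * x ^ 2 + 2 * b * x + c)|} =
      (· + b / a) ⁻¹' {u : ℝ | t < |u / (u ^ 2 + (c / a - (b / a) ^ 2))|} := by
    ext x
    have hnum : a * x + b = a * (x + b / a) := by field_simp
    have hden : a * x ^ 2 + 2 * b * x + c = a * ((x + b / a) ^ 2 + (c / a - (b / a) ^ 2)) := by
      field_simp; ring
    simp only [mem_preimage, mem_ofPred_eq, hnum, hden, mul_div_mul_left _ _ ha]
  rw [hset, measure_preimage_add_right]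
  exact volume_lt_abs_div_sq_add_le _ ht

namespace Matrix

variable {m α : Type*}

section DecidableEq

variable [DecidableEq m]

def updateSymm (B : Matrix m m α) (i j : m) (x : α) : Matrix m m α :=
  of fun k l => if k = i ∧ l = j ∨ k = j ∧ l = i then x else B k l

theorem IsSymm.updateSymm {B : Matrix m m α} (hB : B.IsSymm) (i j : m) (x : α) :
    (B.updateSymm i j x).IsSymm :=
  IsSymm.ext fun k l => by
    simp only [Matrix.updateSymm, of_apply, hB.apply k l]
    congr 1
    exact propext (by tauto)

theorem updateRow_updateRow_self_of_ne {n : Type*} (M : Matrix m n α) {i j : m} (hij : i ≠ j)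
    (u : n → α) : (M.updateRow i u).updateRow j (M j) = M.updateRow i u := by
  rw [← updateRow_ne hij.symm (M := M) (b := u), updateRow_eq_self]

section CommRing

variable {R : Type*} [CommRing R]

theorem updateSymm_eq_updateRow_updateRow (B : Matrix m m R) {i j : m} (hij : i ≠ j) (x : R) :
    B.updateSymm i j x =
      ((B.updateSymm i j 0).updateRow i (B.updateSymm i j 0 i + x • Pi.single j 1)).updateRow j
        (B.updateSymm i j 0 j + x • Pi.single i 1) := by
  ext k l
  simp only [Matrix.updateSymm, updateRow_apply, of_apply, Pi.add_apply, Pi.smul_apply,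
    Pi.single_apply]
  split_ifs <;> simp_all

theorem updateSymm_self_eq_updateRow (B : Matrix m m R) (i : m) (x : R) :
    B.updateSymm i i x =
      (B.updateSymm i i 0).updateRow i (B.updateSymm i i 0 i + x • Pi.single i 1) := by
  ext k l
  simp only [Matrix.updateSymm, updateRow_apply, of_apply, Pi.add_apply, Pi.smul_apply,
    Pi.single_apply]
  split_ifs <;> simp_all

variable [Fintype m]

theorem det_updateRow_self_add (M : Matrix m m R) (i : m) (u : m → R) :
    (M.updateRow i (M i + u)).det = M.det + (M.updateRow i u).det := by
  rw [det_updateRow_add, updateRow_eq_self]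

theorem exists_det_adjugate_updateSymm_self (B : Matrix m m R) (i : m) :
    ∃ b c : R, ∀ x : R,
      (B.updateSymm i i x).det = b * x + c ∧ (B.updateSymm i i x).adjugate i i = b := by
  refine ⟨(B.updateSymm i i 0).adjugate i i, (B.updateSymm i i 0).det, fun x => ⟨?_, ?_⟩⟩
  · rw [updateSymm_self_eq_updateRow, det_updateRow_self_add, det_updateRow_smul,
      adjugate_apply]
    ring
  · rw [updateSymm_self_eq_updateRow, adjugate_apply, updateRow_idem, adjugate_apply]

/-- The symmetry of `B` gives `adj_{ji} = adj_{ij}`, whence the middle coefficient `2 b`. -/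
theorem IsSymm.exists_det_adjugate_updateSymm {B : Matrix m m R} (hB : B.IsSymm) {i j : m}
    (hij : i ≠ j) :
    ∃ a b c : R, ∀ x : R, (B.updateSymm i j x).det = a * x ^ 2 + 2 * b * x + c ∧
      (B.updateSymm i j x).adjugate i j = a * x + b := by
  have hrows := updateSymm_eq_updateRow_updateRow B hij
  have hadj : (B.updateSymm i j 0).adjugate j i = (B.updateSymm i j 0).adjugate i j :=
    (hB.updateSymm i j 0).adjugate.apply i j
  generalize B.updateSymm i j 0 = M at hrows hadj
  refine ⟨((M.updateRow i (Pi.single j 1)).updateRow j (Pi.single i 1)).det, M.adjugate i j,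
    M.det, fun x => ⟨?_, ?_⟩⟩
  · rw [hrows, det_updateRow_add, updateRow_updateRow_self_of_ne _ hij, det_updateRow_self_add,
      det_updateRow_smul, det_updateRow_smul, updateRow_comm _ hij,
      ← updateRow_ne hij (M := M) (b := Pi.single i 1), det_updateRow_self_add,
      det_updateRow_smul, updateRow_comm _ hij.symm, ← adjugate_apply, ← adjugate_apply, hadj]
    ring
  · rw [hrows, adjugate_apply, updateRow_idem, updateRow_comm _ hij,
      ← updateRow_ne hij (M := M) (b := Pi.single i 1), det_updateRow_self_add,
      det_updateRow_smul, updateRow_comm _ hij.symm, ← adjugate_apply]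
    ring

end CommRing

end DecidableEq

section LinearOrder

variable [LinearOrder m]

def symmOfUpper (y : {p : m × m // p.1 ≤ p.2} → α) : Matrix m m α :=
  of fun k l => if h : k ≤ l then y ⟨(k, l), h⟩ else y ⟨(l, k), le_of_not_ge h⟩

theorem symmOfUpper_isSymm (y : {p : m × m // p.1 ≤ p.2} → α) : (symmOfUpper y).IsSymm :=
  IsSymm.ext fun k l => by
    simp only [symmOfUpper, of_apply]
    split_ifs with h₁ h₂ h₂ <;> first | rfl | (cases le_antisymm h₁ h₂; rfl) | (exfalso; grind)

theorem IsSymm.symmOfUpper_apply {A : Matrix m m α} (hA : A.IsSymm) :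
    symmOfUpper (fun p => A p.1.1 p.1.2) = A := by
  ext k l
  simp only [symmOfUpper, of_apply]
  split_ifs
  · rfl
  · exact hA.apply k l

theorem symmOfUpper_update (y : {p : m × m // p.1 ≤ p.2} → α) {i j : m} (hij : i ≤ j) (x : α) :
    symmOfUpper (Function.update y ⟨(i, j), hij⟩ x) = (symmOfUpper y).updateSymm i j x := by
  ext k l
  simp only [symmOfUpper, updateSymm, of_apply, Function.update_apply, Subtype.ext_iff,
    Prod.ext_iff]
  split_ifs <;> first | rfl | (exfalso; grind)

theorem continuous_symmOfUpper [TopologicalSpace α] :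
    Continuous (symmOfUpper : ({p : m × m // p.1 ≤ p.2} → α) → Matrix m m α) :=
  continuous_pi fun k => continuous_pi fun l => by
    simp only [symmOfUpper, of_apply]
    split_ifs <;> exact continuous_apply _

end LinearOrder

variable [DecidableEq m] [Fintype m]

-- Both sides are `0` when `A` is singular.
theorem inv_apply_eq_adjugate_div {K : Type*} [Field K] (A : Matrix m m K) (i j : m) :
    A⁻¹ i j = A.adjugate i j / A.det := by
  rw [inv_def, smul_apply, smul_eq_mul, Ring.inverse_eq_inv, div_eq_inv_mul]

theorem _root_.Continuous.measurable_matrix_inv_apply {X : Type*} [TopologicalSpace X]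
    [MeasurableSpace X] [OpensMeasurableSpace X] {M : X → Matrix m m ℝ} (hM : Continuous M)
    (i j : m) : Measurable fun x => (M x)⁻¹ i j := by
  simp_rw [inv_apply_eq_adjugate_div]
  exact (hM.matrix_adjugate.matrix_elem i j).measurable.div hM.matrix_det.measurable

theorem IsSymm.volume_lt_abs_inv_updateSymm_le {B : Matrix m m ℝ} (hB : B.IsSymm) (i j : m)
    {t : ℝ} (ht : 0 < t) :
    volume {x : ℝ | t < |(B.updateSymm i j x)⁻¹ i j|} ≤ ENNReal.ofReal (2 / t) := by
  simp_rw [inv_apply_eq_adjugate_div]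
  rcases eq_or_ne i j with rfl | hij
  · obtain ⟨b, c, h⟩ := exists_det_adjugate_updateSymm_self B i
    simp_rw [(h _).1, (h _).2]
    exact volume_lt_abs_div_linear_le b c ht
  · obtain ⟨a, b, c, h⟩ := hB.exists_det_adjugate_updateSymm hij
    simp_rw [(h _).1, (h _).2]
    exact volume_lt_abs_div_quadratic_le a b c ht

end Matrix

theorem MeasureTheory.Measure.pi_le_of_forall_update_le {ι : Type*} [Fintype ι] [DecidableEq ι]
    {X : ι → Type*} [∀ i, MeasurableSpace (X i)] {μ : ∀ i, Measure (X i)}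
    [∀ i, IsProbabilityMeasure (μ i)] {S : Set (∀ i, X i)} (hS : MeasurableSet S) (i : ι)
    {C : ℝ≥0∞} (hC : ∀ x, μ i (Function.update x i ⁻¹' S) ≤ C) :
    Measure.pi μ S ≤ C := by
  have x₀ : ∀ k, X k := fun k => (nonempty_of_isProbabilityMeasure (μ k)).some
  have hslice : ∀ x, ∫⁻ xᵢ, S.indicator 1 (Function.update x i xᵢ) ∂μ i ≤ C := fun x =>
    (lintegral_indicator_one (hS.preimage (measurable_update x))).trans_le (hC x)
  calc Measure.pi μ S = (∫⋯∫⁻_insert i (Finset.univ.erase i), S.indicator 1 ∂μ) x₀ := by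
        rw [Finset.insert_erase (Finset.mem_univ i), ← lintegral_eq_lmarginal_univ,
          lintegral_indicator_one hS]
    _ ≤ (∫⋯∫⁻_Finset.univ.erase i, (fun _ => C) ∂μ) x₀ := by
        rw [lmarginal_insert' _ (measurable_one.indicator hS) (Finset.notMem_erase i _)]
        exact lmarginal_mono hslice x₀
    _ = C := by simp [lmarginal]

theorem MeasureTheory.map_apply_le_of_pdf_le {Ω E : Type*} [MeasurableSpace Ω]
    [MeasurableSpace E] {X : Ω → E} {P : Measure Ω} {μ : Measure E} [HasPDF X P μ] [SFinite μ]
    {C : ℝ≥0∞} (hC : ∀ x, pdf X P μ x ≤ C) (s : Set E) : P.map X s ≤ C * μ s := by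
  rw [map_eq_withDensity_pdf X P μ, withDensity_apply' _ s, ← setLIntegral_const]
  exact lintegral_mono hC

theorem ProbabilityTheory.iIndepFun.measure_le_of_forall_update_le {Ω ι : Type*}
    [MeasurableSpace Ω] {μ : Measure Ω} [Fintype ι] [DecidableEq ι] {β : ι → Type*}
    [∀ i, MeasurableSpace (β i)] {f : ∀ i, Ω → β i} (hind : iIndepFun f μ)
    (hf : ∀ i, AEMeasurable (f i) μ) {S : Set (∀ i, β i)} (hS : MeasurableSet S) (i : ι)
    {C : ℝ≥0∞} (hC : ∀ x, μ.map (f i) (Function.update x i ⁻¹' S) ≤ C) :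
    μ ((fun ω j => f j ω) ⁻¹' S) ≤ C := by
  have := hind.isProbabilityMeasure
  have : ∀ j, IsProbabilityMeasure (μ.map (f j)) := fun j =>
    Measure.isProbabilityMeasure_map (hf j)
  rw [← Measure.map_apply_of_aemeasurable (aemeasurable_pi_lambda _ hf) hS,
    hind.map_fun_eq_pi_map hf]
  exact Measure.pi_le_of_forall_update_le hS i hC

theorem inv_entry_weak_bound_general {Ω : Type*} [MeasureSpace Ω]
    {n : ℕ} (A : Ω → Matrix (Fin n) (Fin n) ℝ) (K : ℝ)
    (hsymm : ∀ ω, (A ω).IsSymm)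
    (hindep : iIndepFun
      (fun (p : {p : Fin n × Fin n // p.1 ≤ p.2}) ω => A ω p.1.1 p.1.2) ℙ)
    (hpdf : ∀ i j : Fin n, i ≤ j → HasPDF (fun ω => A ω i j) ℙ)
    (hK : ∀ i j : Fin n, i ≤ j → ∀ x, pdf (fun ω => A ω i j) ℙ volume x ≤ ENNReal.ofReal K)
    (i j : Fin n) :
    ∀ t > 0, ℙ {ω | |(A ω)⁻¹ i j| > t} ≤ ENNReal.ofReal (2 * K / t) := by
  intro t ht
  wlog hij : i ≤ j generalizing i j
  · have hinv : ∀ ω, (A ω)⁻¹ j i = (A ω)⁻¹ i j := fun ω => (hsymm ω).inv.apply i j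
    simpa only [hinv] using this j i (le_of_not_ge hij)
  set S := {y | t < |(Matrix.symmOfUpper y)⁻¹ i j|}
  have hS : MeasurableSet S :=
    measurableSet_lt measurable_const
      (Matrix.continuous_symmOfUpper.measurable_matrix_inv_apply i j).abs
  have hA : {ω | |(A ω)⁻¹ i j| > t} = (fun ω p => A ω p.1.1 p.1.2) ⁻¹' S := by
    simp only [S, preimage, mem_ofPred_eq, (hsymm _).symmOfUpper_apply, gt_iff_lt]
  rw [hA]
  refine hindep.measure_le_of_forall_update_le
    (fun p => (hpdf p.1.1 p.1.2 p.2).aemeasurable') hS ⟨(i, j), hij⟩ fun y => ?_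
  have := hpdf i j hij
  calc _ ≤ ENNReal.ofReal K * volume (Function.update y ⟨(i, j), hij⟩ ⁻¹' S) :=
        map_apply_le_of_pdf_le (hK i j hij) _
    _ ≤ ENNReal.ofReal K * ENNReal.ofReal (2 / t) := by
        gcongr
        simpa only [preimage, S, mem_ofPred_eq, Matrix.symmOfUpper_update] using
          (Matrix.symmOfUpper_isSymm y).volume_lt_abs_inv_updateSymm_le i j ht
    _ = ENNReal.ofReal (2 * K / t) := by
        rw [← ENNReal.ofReal_mul' (by positivity)]
        ring_nf

/-- For a symmetric random matrix with independent entries having densities bounded by K,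
each entry of the inverse satisfies P(|(A⁻¹)_{i,j}| > t) ≤ 2K/t. -/
theorem inv_entry_weak_bound {Ω : Type*} [MeasureSpace Ω]
    [IsProbabilityMeasure (ℙ : Measure Ω)]
    {n : ℕ} (A : Ω → Matrix (Fin n) (Fin n) ℝ) (K : ℝ)
    (hsymm : ∀ ω, (A ω).IsSymm)
    (hindep : iIndepFun
      (fun (p : {p : Fin n × Fin n // p.1 ≤ p.2}) ω => A ω p.1.1 p.1.2) ℙ)
    (hpdf : ∀ i j : Fin n, i ≤ j → HasPDF (fun ω => A ω i j) ℙ)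
    (hK : ∀ i j : Fin n, i ≤ j → ∀ x, pdf (fun ω => A ω i j) ℙ volume x ≤ ENNReal.ofReal K)
    (i j : Fin n) :
    ∀ t > 0, ℙ {ω | |(A ω)⁻¹ i j| > t} ≤ ENNReal.ofReal (2 * K / t) :=
  inv_entry_weak_bound_general A K hsymm hindep hpdf hK i j
end
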